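/- arXiv:2512.08776 — 2 statements merged into one kernel-verified Lean document; each statement's English description precedes it below -/
import Mathlib

section
/- Let v0 > 0, let t0 < t1, and let x : [t0, t1] → ℝ² be differentiable with ‖x'(t)‖ ≤ v0 for all t ∈ [t0, t1]. If equality ‖x(t1) − x(t0)‖ = v0·(t1 − t0) holds, then x parametrizes the straight segment affinely: x(t) = x(t0) + ((t − t0)/(t1 − t0))·(x(t1) − x(t0)) for every t ∈ [t0, t1]. -/
/-!
By the mean value inequality the curve moves at most `v0 * (t - t0)` on `[t0, t]` and at most
`v0 * (t1 - t)` on `[t, t1]`. Equality of the total displacement forces equality in both bounds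
and in the triangle inequality, and in a strictly convex space the latter makes the two
displacements point in the same direction, which pins `x t` on the segment.
-/

open Set

theorem norm_sub_le_mul_of_hasDerivWithinAt_Icc {E : Type*} [NormedAddCommGroup E]
    [NormedSpace ℝ E] {f f' : ℝ → E} {a b C s u : ℝ}
    (hf : ∀ t ∈ Icc a b, HasDerivWithinAt f (f' t) (Icc a b) t)
    (bound : ∀ t ∈ Icc a b, ‖f' t‖ ≤ C) (has : a ≤ s) (hsu : s ≤ u) (hub : u ≤ b) :
    ‖f u - f s‖ ≤ C * (u - s) :=
  have hsub : Icc s u ⊆ Icc a b := Icc_subset_Icc has hub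
  norm_image_sub_le_of_norm_deriv_le_segment'
    (fun t ht => (hf t (hsub ht)).mono hsub)
    (fun t ht => bound t (hsub (Ico_subset_Icc_self ht))) u ⟨hsu, le_rfl⟩

theorem add_smul_eq_smul_add_of_norm_add_eq {E : Type*} [NormedAddCommGroup E]
    [NormedSpace ℝ E] [StrictConvexSpace ℝ E] {a b : E} {p q : ℝ}
    (ha : ‖a‖ ≤ p) (hb : ‖b‖ ≤ q) (hab : ‖a + b‖ = p + q) :
    (p + q) • a = p • (a + b) := by
  have htri := norm_add_le a b
  have hp : ‖a‖ = p := by linarith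
  have hq : ‖b‖ = q := by linarith
  have hray : SameRay ℝ a b := sameRay_iff_norm_add.mpr (by rw [hab, hp, hq])
  have hsmul := hray.norm_smul_eq
  rw [hp, hq] at hsmul
  rw [smul_add, hsmul, add_smul, add_comm]

/-- Rigidity in the time-optimal path problem at bounded speed:
if a curve with speed bound `v0` achieves displacement `v0 * (t1 - t0)`,
then it parametrizes the straight segment affinely. -/
theorem bounded_speed_equality_rigidity
    (v0 t0 t1 : ℝ) (hv0 : 0 < v0) (ht : t0 < t1)
    (x x' : ℝ → EuclideanSpace ℝ (Fin 2))
    (hderiv : ∀ t ∈ Set.Icc t0 t1, HasDerivWithinAt x (x' t) (Set.Icc t0 t1) t)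
    (hbound : ∀ t ∈ Set.Icc t0 t1, ‖x' t‖ ≤ v0)
    (heq : ‖x t1 - x t0‖ = v0 * (t1 - t0)) :
    ∀ t ∈ Set.Icc t0 t1,
      x t = x t0 + ((t - t0) / (t1 - t0)) • (x t1 - x t0) := by
  rintro t ⟨ht0, ht1⟩
  have hfirst := norm_sub_le_mul_of_hasDerivWithinAt_Icc hderiv hbound le_rfl ht0 ht1
  have hsecond := norm_sub_le_mul_of_hasDerivWithinAt_Icc hderiv hbound ht0 ht1 le_rfl
  have hsplit : x t - x t0 + (x t1 - x t) = x t1 - x t0 := sub_add_sub_cancel' _ _ _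
  have hkey := add_smul_eq_smul_add_of_norm_add_eq hfirst hsecond
    (by rw [hsplit, heq]; ring)
  rw [hsplit, ← mul_add, sub_add_sub_cancel'] at hkey
  have hne : v0 * (t1 - t0) ≠ 0 := mul_ne_zero hv0.ne' (sub_pos.mpr ht).ne'
  have hcoef : (t - t0) / (t1 - t0) = (v0 * (t1 - t0))⁻¹ * (v0 * (t - t0)) := by
    field_simp
  rw [hcoef, mul_smul, ← hkey, inv_smul_smul₀ hne, add_sub_cancel]
end

section
/- The function f(θ) = (θ − sin θ)/(1 − cos θ) is strictly monotone increasing on the open interval (0, 2π). -/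
open Real

lemma aux_sin_sub_mul_cos_pos {t : ℝ} (h0 : 0 < t) (hπ : t < π) :
    0 < Real.sin t - t * Real.cos t := by
  have hmono : StrictMonoOn (fun s : ℝ => Real.sin s - s * Real.cos s)
      (Set.Icc 0 π) := by
    apply strictMonoOn_of_deriv_pos (convex_Icc 0 π)
    · exact (Real.continuous_sin.sub (continuous_id.mul Real.continuous_cos)).continuousOn
    · intro s hs
      rw [interior_Icc] at hs
      have hd : HasDerivAt (fun s : ℝ => Real.sin s - s * Real.cos s)
          (Real.cos s - (1 * Real.cos s + s * (-Real.sin s))) s :=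
        (Real.hasDerivAt_sin s).sub ((hasDerivAt_id s).mul (Real.hasDerivAt_cos s))
      rw [hd.deriv]
      have hsin : 0 < Real.sin s := Real.sin_pos_of_pos_of_lt_pi hs.1 hs.2
      nlinarith [mul_pos hs.1 hsin]
  have h := hmono (Set.left_mem_Icc.2 Real.pi_pos.le)
      ⟨h0.le, hπ.le⟩ h0
  simpa using h

lemma aux_one_sub_cos_pos {θ : ℝ} (h0 : 0 < θ) (h2 : θ < 2 * π) :
    0 < 1 - Real.cos θ := by
  have hs : 0 < Real.sin (θ / 2) :=
    Real.sin_pos_of_pos_of_lt_pi (by linarith) (by linarith)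
  have hsq : Real.cos θ = 2 * Real.cos (θ / 2) ^ 2 - 1 := by
    have := Real.cos_two_mul (θ / 2)
    rw [show (2 : ℝ) * (θ / 2) = θ by ring] at this
    exact this
  have hp := Real.sin_sq_add_cos_sq (θ / 2)
  nlinarith [sq_nonneg (Real.sin (θ / 2))]

/-- `θ ↦ (θ - sin θ)/(1 - cos θ)` is strictly monotone increasing
on `(0, 2π)`. -/
theorem cycloid_ratio_strictMonoOn :
    StrictMonoOn (fun θ : ℝ => (θ - Real.sin θ) / (1 - Real.cos θ))
      (Set.Ioo 0 (2 * π)) := by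
  apply strictMonoOn_of_deriv_pos (convex_Ioo 0 (2 * π))
  · apply ContinuousOn.div
    · exact (continuous_id.sub Real.continuous_sin).continuousOn
    · exact (continuous_const.sub Real.continuous_cos).continuousOn
    · intro θ hθ
      exact ne_of_gt (aux_one_sub_cos_pos hθ.1 hθ.2)
  · intro θ hθ
    rw [interior_Ioo] at hθ
    obtain ⟨h0, h2⟩ := hθ
    have hden : 0 < 1 - Real.cos θ := aux_one_sub_cos_pos h0 h2
    have hd : HasDerivAt (fun θ : ℝ => (θ - Real.sin θ) / (1 - Real.cos θ))
        (((1 - Real.cos θ) * (1 - Real.cos θ) - (θ - Real.sin θ) * (0 - (-Real.sin θ))) /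
          (1 - Real.cos θ) ^ 2) θ := by
      exact ((hasDerivAt_id θ).sub (Real.hasDerivAt_sin θ)).div
        ((hasDerivAt_const θ 1).sub (Real.hasDerivAt_cos θ)) (ne_of_gt hden)
    rw [hd.deriv]
    apply div_pos
    · -- numerator: (1-cos)^2 - (θ - sin) sin = 4 sin(θ/2)(sin(θ/2) - (θ/2)cos(θ/2))
      set t := θ / 2 with ht
      have hsin : 0 < Real.sin t := Real.sin_pos_of_pos_of_lt_pi (by positivity)
        (by rw [ht]; linarith)
      have hkey : 0 < Real.sin t - t * Real.cos t :=
        aux_sin_sub_mul_cos_pos (by positivity) (by rw [ht]; linarith)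
      have hcosθ : Real.cos θ = 1 - 2 * Real.sin t ^ 2 := by
        have h1 := Real.cos_two_mul t
        rw [ht, show (2 : ℝ) * (θ / 2) = θ by ring] at h1
        have h2 := Real.sin_sq_add_cos_sq t
        linarith
      have hsinθ : Real.sin θ = 2 * Real.sin t * Real.cos t := by
        have : Real.sin (2 * t) = 2 * Real.sin t * Real.cos t := Real.sin_two_mul t
        rw [ht] at this
        rw [show (2 : ℝ) * (θ / 2) = θ by ring] at this
        exact this
      have hθt : θ = 2 * t := by rw [ht]; ring
      have hpyth : Real.sin t ^ 2 + Real.cos t ^ 2 = 1 := Real.sin_sq_add_cos_sq t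
      rw [hcosθ, hsinθ, hθt]
      nlinarith [mul_pos hsin hkey, sq_nonneg (Real.sin t), sq_nonneg (Real.cos t)]
    · positivity
end
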